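/- arXiv:2002.10672 — 4 statements merged into one kernel-verified Lean document; each statement's English description precedes it below -/
import Mathlib

section
/- Let H be a finite set of lines with positive integer weights w(l) = 2^{k(l)}, let w(H) = ∑_{l∈H} w(l), and suppose 2^a ≤ w(H) < 2^{a+1} and 2^b ≤ r where r = |H| ≥ 1 and b = ⌊log₂ r⌋. Define the multiset H' containing 2^{b+1+k(l)-a} copies of each l with b+1+k(l)-a ≥ 0 and one copy otherwise. If Ξ is a (1/(5√r))-cutting for the unweighted multiset H' (i.e., every triangle of Ξ is crossed by at most |H'|/(5√r) elements of H' counted with multiplicity, and |H'| ≤ 5r), then for every triangle Δ of Ξ, the total weight of the lines of H crossing Δ is at most w(H)/√r. In particular, Ξ is a (1/√r)-cutting for the weighted set (H, w). -/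
open Classical
open Finset

/-! Duplicating a line of weight `2^k` into `2^(b+1+k-a)` copies makes its multiplicity at least
`2^k · 2^(b+1) / 2^a`, so a triangle crossed by unweighted mass `B` is crossed by weight at most
`B · 2^a / 2^(b+1) ≤ B · w(H) / r`. Since `|H'| ≤ 5r`, the cutting condition gives `B ≤ √r`,
hence weight at most `w(H)/√r`. -/

lemma two_pow_mul_two_pow_le_mul_two_pow (a c k : ℕ) :
    2 ^ k * 2 ^ c ≤ (if a ≤ c + k then 2 ^ (c + k - a) else 1) * 2 ^ a := by
  split_ifs with h
  · rw [← pow_add, ← pow_add]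
    exact le_of_eq (congrArg _ (by omega))
  · rw [one_mul, ← pow_add]
    exact Nat.pow_le_pow_right (by norm_num) (by omega)

lemma sum_two_pow_mul_le_sum_mul_two_pow {L : Type*} (S : Finset L) (k m : L → ℕ) (a c : ℕ)
    (hm : ∀ l, m l = if a ≤ c + k l then 2 ^ (c + k l - a) else 1) :
    (∑ l ∈ S, (2 : ℝ) ^ k l) * 2 ^ c ≤ (∑ l ∈ S, (m l : ℝ)) * 2 ^ a := by
  rw [sum_mul, sum_mul]
  refine sum_le_sum fun l _ => ?_
  have h := two_pow_mul_two_pow_le_mul_two_pow a c (k l)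
  rw [← hm l] at h
  exact_mod_cast h

lemma le_sqrt_of_le_div_five_mul_sqrt {B M r : ℝ} (hr : 0 < r) (hM : M ≤ 5 * r)
    (hB : B ≤ M / (5 * √r)) : B ≤ √r :=
  calc B ≤ M / (5 * √r) := hB
    _ ≤ 5 * r / (5 * √r) := by gcongr
    _ = √r := by rw [mul_div_mul_left _ _ (by norm_num), Real.div_sqrt]

theorem weighted_cutting_from_unweighted_general {L Tri : Type*} (H : Finset L) (k : L → ℕ)
    (r a b : ℕ) (hr : 1 ≤ r)
    (hwa : 2 ^ a ≤ ∑ l ∈ H, 2 ^ (k l))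
    (hb' : r ≤ 2 ^ (b + 1))
    (m : L → ℕ)
    (hm : ∀ l, m l = if a ≤ b + 1 + k l then 2 ^ (b + 1 + k l - a) else 1)
    (hH' : ∑ l ∈ H, m l ≤ 5 * r)
    (Ξ : Finset Tri) (Cross : L → Tri → Prop)
    (hcut : ∀ Δ ∈ Ξ, ∑ l ∈ H.filter (fun l => Cross l Δ), (m l : ℝ)
        ≤ (∑ l ∈ H, (m l : ℝ)) / (5 * Real.sqrt r)) :
    ∀ Δ ∈ Ξ, ∑ l ∈ H.filter (fun l => Cross l Δ), ((2 : ℝ) ^ (k l))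
        ≤ (∑ l ∈ H, ((2 : ℝ) ^ (k l))) / Real.sqrt r := by
  intro Δ hΔ
  set S := H.filter (fun l => Cross l Δ)
  have hr₀ : (0 : ℝ) < r := by exact_mod_cast hr
  have hs : 0 < √(r : ℝ) := Real.sqrt_pos.2 hr₀
  have hweight := sum_two_pow_mul_le_sum_mul_two_pow S k m a (b + 1) hm
  have hmass : ∑ l ∈ S, (m l : ℝ) ≤ √r :=
    le_sqrt_of_le_div_five_mul_sqrt hr₀ (by exact_mod_cast hH') (hcut Δ hΔ)
  have hW : (2 : ℝ) ^ a ≤ ∑ l ∈ H, (2 : ℝ) ^ k l := by exact_mod_cast hwa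
  have hP : (r : ℝ) ≤ 2 ^ (b + 1) := by exact_mod_cast hb'
  rw [le_div_iff₀ hs]
  refine le_of_mul_le_mul_right ?_ hs
  calc (∑ l ∈ S, (2 : ℝ) ^ k l) * √r * √r = (∑ l ∈ S, (2 : ℝ) ^ k l) * r := by
        rw [mul_assoc, Real.mul_self_sqrt hr₀.le]
    _ ≤ (∑ l ∈ S, (2 : ℝ) ^ k l) * 2 ^ (b + 1) := by gcongr
    _ ≤ (∑ l ∈ S, (m l : ℝ)) * 2 ^ a := hweight
    _ ≤ √r * ∑ l ∈ H, (2 : ℝ) ^ k l := by gcongr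
    _ = (∑ l ∈ H, (2 : ℝ) ^ k l) * √r := mul_comm _ _

/-- If `Ξ` is a `(1/(5√r))`-cutting for the unweighted multiset `H'` obtained by
duplicating each line `l` of `H` into `max(1, 2^(b+1+k l-a))` copies (with
`2^a ≤ w(H) < 2^(a+1)`, `w l = 2^(k l)`, `2^b ≤ r ≤ 2^(b+1)`, `r = |H| ≥ 1`,
and `|H'| ≤ 5r`), then for every triangle `Δ` of `Ξ`, the total weight of the
lines of `H` crossing `Δ` is at most `w(H)/√r`; i.e. `Ξ` is a `(1/√r)`-cutting
for the weighted set `(H, w)`. -/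
theorem weighted_cutting_from_unweighted {L Tri : Type*} (H : Finset L) (k : L → ℕ)
    (r a b : ℕ) (hr : 1 ≤ r) (hcard : H.card = r)
    (hwa : 2 ^ a ≤ ∑ l ∈ H, 2 ^ (k l))
    (hwa' : ∑ l ∈ H, 2 ^ (k l) < 2 ^ (a + 1))
    (hb : 2 ^ b ≤ r) (hb' : r ≤ 2 ^ (b + 1))
    (m : L → ℕ)
    (hm : ∀ l, m l = if a ≤ b + 1 + k l then 2 ^ (b + 1 + k l - a) else 1)
    (hH' : ∑ l ∈ H, m l ≤ 5 * r)
    (Ξ : Finset Tri) (Cross : L → Tri → Prop)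
    (hcut : ∀ Δ ∈ Ξ, ∑ l ∈ H.filter (fun l => Cross l Δ), (m l : ℝ)
        ≤ (∑ l ∈ H, (m l : ℝ)) / (5 * Real.sqrt r)) :
    ∀ Δ ∈ Ξ, ∑ l ∈ H.filter (fun l => Cross l Δ), ((2 : ℝ) ^ (k l))
        ≤ (∑ l ∈ H, ((2 : ℝ) ^ (k l))) / Real.sqrt r :=
  weighted_cutting_from_unweighted_general H k r a b hr hwa hb' m hm hH' Ξ Cross hcut
end

section
/- Let T be a complete binary interval tree on n points sorted by x-coordinate, where each edge of the upper convex hull of the point set is stored at the highest internal node that it spans (a segment spans a node v if the x-projection of v's interval is contained in the x-projection of the segment). Then for any two nodes of T that each store a hull edge (are 'full'), their lowest common ancestor in T is also full. -/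
/-- Interval-tree/full-node lemma, in the dyadic encoding of the complete binary
interval tree on the `2^h` leaves (points sorted by `x`-coordinate): each internal
node corresponds to a unique gap `g ∈ {1, …, 2^h - 1}` between consecutive leaves,
a hull edge joining leaves `v i < v (i+1)` spans node `g` iff `v i < g ≤ v (i+1)`,
node heights correspond to the 2-adic valuation of `g`, and an edge is stored at
the highest node it spans.  The upper hull is given by its vertex indices
`v 0 < v 1 < ⋯ < v t` with `v 0 = 0` and `v t = 2^h - 1`; a node `g` is full iff
it is a highest node spanned by some hull edge.  Claim: if `g1 ≤ g2` are full and
`g` is the node of maximal height among those with `g1 ≤ g ≤ g2` (i.e. the lowest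
common ancestor of `g1` and `g2`), then `g` is full. -/
theorem lca_of_full_nodes_is_full (h t : ℕ) (v : Fin (t + 1) → ℕ)
    (hmono : StrictMono v) (h0 : v 0 = 0) (hlast : v (Fin.last t) = 2 ^ h - 1)
    (Full : ℕ → Prop)
    (hFull : ∀ g, Full g ↔ ∃ i : Fin t, v i.castSucc < g ∧ g ≤ v i.succ ∧
        ∀ g', v i.castSucc < g' → g' ≤ v i.succ →
          padicValNat 2 g' ≤ padicValNat 2 g)
    (g1 g2 : ℕ) (hg1 : Full g1) (hg2 : Full g2) (hle : g1 ≤ g2)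
    (g : ℕ) (hgl : g1 ≤ g) (hgr : g ≤ g2)
    (hmax : ∀ g', g1 ≤ g' → g' ≤ g2 → padicValNat 2 g' ≤ padicValNat 2 g) :
    Full g := by
  classical
  obtain ⟨i1, h1l, h1r, h1m⟩ := (hFull g1).1 hg1
  obtain ⟨i2, h2l, h2r, h2m⟩ := (hFull g2).1 hg2
  have hvmono : Monotone v := hmono.monotone
  -- uniqueness of the containing interval
  have huniq : ∀ (a b : Fin t) (x : ℕ), v a.castSucc < x → x ≤ v a.succ →
      v b.castSucc < x → x ≤ v b.succ → a = b := by
    intro a b x hal har hbl hbr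
    rcases lt_trichotomy a b with hab | hab | hab
    · exfalso
      have : v a.succ ≤ v b.castSucc := by
        apply hvmono
        simp only [Fin.le_def, Fin.val_succ, Fin.coe_castSucc]
        have := (Fin.lt_def).1 hab; omega
      omega
    · exact hab
    · exfalso
      have : v b.succ ≤ v a.castSucc := by
        apply hvmono
        simp only [Fin.le_def, Fin.val_succ, Fin.coe_castSucc]
        have := (Fin.lt_def).1 hab; omega
      omega
  -- find the interval containing g
  set S : Finset (Fin t) := Finset.univ.filter (fun i => v i.castSucc < g) with hSdef
  have hi1S : i1 ∈ S := by
    simp only [hSdef, Finset.mem_filter, Finset.mem_univ, true_and]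
    omega
  have hSne : S.Nonempty := ⟨i1, hi1S⟩
  set j := S.max' hSne with hjdef
  have hjS : j ∈ S := S.max'_mem hSne
  have hjl : v j.castSucc < g := by
    simpa only [hSdef, Finset.mem_filter, Finset.mem_univ, true_and] using hjS
  have hjr : g ≤ v j.succ := by
    by_contra hc
    push_neg at hc
    by_cases hjt : (j : ℕ) + 1 < t
    · set j' : Fin t := ⟨(j : ℕ) + 1, hjt⟩ with hj'
      have hj'S : j' ∈ S := by
        simp only [hSdef, Finset.mem_filter, Finset.mem_univ, true_and]
        have : v j'.castSucc = v j.succ := rfl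
        omega
      have := S.le_max' j' hj'S
      rw [← hjdef] at this
      have := (Fin.le_def).1 this
      simp [hj'] at this
    · have hjt' : (j : ℕ) + 1 = t := by have := j.isLt; omega
      have hjlast : j.succ = Fin.last t := by ext; simp [hjt']
      have : v i2.succ ≤ v (Fin.last t) := hvmono (Fin.le_last _)
      rw [← hjlast] at this
      omega
  refine (hFull g).2 ⟨j, hjl, hjr, ?_⟩
  intro g' hg'l hg'r
  by_cases hc1 : g1 ≤ g'
  · by_cases hc2 : g' ≤ g2
    · exact hmax g' hc1 hc2
    · push_neg at hc2
      have hji2 : j = i2 := huniq j i2 g2 (by omega) (by omega) h2l h2r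
      have := h2m g' (by rw [← hji2]; omega) (by rw [← hji2]; omega)
      exact this.trans (hmax g2 hle le_rfl)
  · push_neg at hc1
    have hji1 : j = i1 := huniq j i1 g1 (by omega) (by omega) h1l h1r
    have := h1m g' (by rw [← hji1]; omega) (by rw [← hji1]; omega)
    exact this.trans (hmax g1 le_rfl hle)
end

section
/- Let S be a set of n points in ℝ² with distinct x-coordinates and let T(S) be the interval tree on S. Every edge of the upper hull H_U(S) spans at least one internal node of T(S), and distinct upper-hull edges are stored at distinct nodes when each edge is stored at the highest node it spans. Consequently, the number of full nodes of T(S) equals the number of edges of H_U(S). -/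
/-!
Among the positive integers of an interval, the one of largest 2-adic valuation is unique:
if `g < g'` both had the maximal valuation `m`, then `g + 2 ^ m` would lie between them
(both are multiples of `2 ^ m`) and be divisible by `2 ^ (m + 1)` (as `g / 2 ^ m` is odd).
So each hull edge is stored at exactly one node, and since hull edges are x-disjoint,
distinct edges are stored at distinct nodes.
-/

open Set Function

theorem padicValNat_two_lt_add_two_pow {g : ℕ} (hg : g ≠ 0) :
    padicValNat 2 g < padicValNat 2 (g + 2 ^ padicValNat 2 g) := by
  set m := padicValNat 2 g
  obtain ⟨c, hc⟩ : 2 ^ m ∣ g := pow_padicValNat_dvd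
  have hc_odd : ¬ 2 ∣ c := fun ⟨e, he⟩ =>
    pow_succ_padicValNat_not_dvd (p := 2) hg ⟨e, hc.trans (by rw [he, pow_succ, mul_assoc])⟩
  have hdvd : 2 ^ (m + 1) ∣ g + 2 ^ m := by
    rw [hc, ← mul_add_one, pow_succ]
    exact mul_dvd_mul_left _ (by omega)
  exact (padicValNat_dvd_iff_le (by positivity)).mp hdvd

theorem eq_of_isMaxOn_padicValNat_two {s : Set ℕ} (hs : s.OrdConnected) (hs₀ : 0 ∉ s)
    {g g' : ℕ} (hg : g ∈ s) (hg' : g' ∈ s) (hmax : IsMaxOn (padicValNat 2) s g)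
    (hmax' : IsMaxOn (padicValNat 2) s g') : g = g' := by
  wlog hlt : g < g' generalizing g g'
  · rcases (not_lt.mp hlt).eq_or_lt with heq | hgt
    · exact heq.symm
    · exact (this hg' hg hmax' hmax hgt).symm
  set m := padicValNat 2 g
  have hval : padicValNat 2 g' = m := le_antisymm (hmax hg') (hmax' hg)
  have hg₀ : g ≠ 0 := ne_of_mem_of_not_mem hg hs₀
  have hstep : 2 ^ m ≤ g' - g := Nat.le_of_dvd (by omega) <|
    Nat.dvd_sub (hval ▸ pow_padicValNat_dvd) pow_padicValNat_dvd
  have hmem : g + 2 ^ m ∈ s := hs.out hg hg' ⟨Nat.le_add_right _ _, by omega⟩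
  exact ((hmax hmem).not_gt (padicValNat_two_lt_add_two_pow hg₀)).elim

theorem Monotone.pairwise_disjoint_on_Ioc_castSucc_succ {α : Type*} [Preorder α] {n : ℕ}
    {v : Fin (n + 1) → α} (hv : Monotone v) :
    Pairwise (Disjoint on fun i : Fin n => Ioc (v i.castSucc) (v i.succ)) := by
  intro i j hij
  rcases hij.lt_or_gt with hlt | hgt
  · exact Ioc_disjoint_Ioc_of_le (hv (Fin.succ_le_castSucc_iff.mpr hlt))
  · exact (Ioc_disjoint_Ioc_of_le (hv (Fin.succ_le_castSucc_iff.mpr hgt))).symm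

/-- Dyadic encoding of the interval tree on `2 ^ h` leaves: internal nodes are the gaps `g`
between consecutive leaves, the height of `g` is its 2-adic valuation, the edge joining leaves
`v i < v (i + 1)` spans `g` iff `v i < g ≤ v (i + 1)`, and a node is full when it is the highest
node spanned by some hull edge. -/
theorem full_nodes_count_eq_hull_edges_general (t : ℕ)
    (v : Fin (t + 1) → ℕ)
    (hmono : StrictMono v)
    (Full : ℕ → Prop)
    (hFull : ∀ g, Full g ↔ ∃ i : Fin t, v i.castSucc < g ∧ g ≤ v i.succ ∧
        ∀ g', v i.castSucc < g' → g' ≤ v i.succ →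
          padicValNat 2 g' ≤ padicValNat 2 g) :
    (∀ i : Fin t, ∃ g, v i.castSucc < g ∧ g ≤ v i.succ) ∧
    {g | Full g}.Finite ∧ {g | Full g}.ncard = t := by
  set span : Fin t → Set ℕ := fun i => Ioc (v i.castSucc) (v i.succ)
  have hspan : ∀ i, (span i).Nonempty := fun i => nonempty_Ioc.mpr (hmono i.castSucc_lt_succ)
  have hFull_iff : ∀ g, Full g ↔ ∃ i, g ∈ span i ∧ IsMaxOn (padicValNat 2) (span i) g := by
    simp only [hFull, span, mem_Ioc, isMaxOn_iff, and_imp, and_assoc, implies_true]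
  choose top htop htop_max using fun i => exists_max_image (span i) (padicValNat 2)
    (finite_Ioc _ _) (hspan i)
  have hrange : {g | Full g} = range top := by
    ext g
    simp only [mem_ofPred_eq, hFull_iff, mem_range]
    constructor
    · rintro ⟨i, hg, hmax⟩
      exact ⟨i, eq_of_isMaxOn_padicValNat_two ordConnected_Ioc (fun h => Nat.not_lt_zero _ h.1)
        (htop i) hg (isMaxOn_iff.mpr (htop_max i)) hmax⟩
    · rintro ⟨i, rfl⟩
      exact ⟨i, htop i, isMaxOn_iff.mpr (htop_max i)⟩
  have hinj : Injective top := fun i j hij => by_contra fun hne =>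
    (hmono.monotone.pairwise_disjoint_on_Ioc_castSucc_succ hne).ne_of_mem (htop i) (htop j) hij
  refine ⟨hspan, hrange ▸ finite_range top, ?_⟩
  rw [hrange, ncard_range_of_injective hinj, Nat.card_fin]

/-- In the dyadic encoding of the complete binary interval tree on `2^h` leaves
(internal nodes ↔ gaps `g` between consecutive leaves, heights ↔ 2-adic
valuations, an edge joining leaves `v i < v (i+1)` spans `g` iff
`v i < g ≤ v (i+1)`, and each upper-hull edge `i` is stored at the highest gap it
spans): every hull edge spans at least one internal node, and — the upper-hull
edges being given by vertex indices `v 0 = 0 < v 1 < ⋯ < v t = 2^h - 1` — the set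
of full nodes is finite with exactly `t` elements, one per hull edge. -/
theorem full_nodes_count_eq_hull_edges (h t : ℕ) (ht : 1 ≤ t)
    (v : Fin (t + 1) → ℕ)
    (hmono : StrictMono v) (h0 : v 0 = 0) (hlast : v (Fin.last t) = 2 ^ h - 1)
    (Full : ℕ → Prop)
    (hFull : ∀ g, Full g ↔ ∃ i : Fin t, v i.castSucc < g ∧ g ≤ v i.succ ∧
        ∀ g', v i.castSucc < g' → g' ≤ v i.succ →
          padicValNat 2 g' ≤ padicValNat 2 g) :
    (∀ i : Fin t, ∃ g, v i.castSucc < g ∧ g ≤ v i.succ) ∧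
    {g | Full g}.Finite ∧ {g | Full g}.ncard = t :=
  full_nodes_count_eq_hull_edges_general t v hmono Full hFull
end

section
/- Combining the two previous facts: in the simplicial-partition construction with weights w_i(l) = 2^{k_i(l)}, where k_i(l) counts cells among Δ₁, …, Δ_i crossed by l, each Δ_{i+1} chosen from a (1/t_i)-cutting of (H, w_i) with t_i = Θ(√(n_i/z)) and n_i ≥ 2z, and with m = Θ(n/z) iterations, one has log₂ w_m(H) = O(√(n/z) + log |H|). Consequently, every line l ∈ H crosses at most k_m(l) ≤ log₂ w_m(H) = O(√r) cells, where r = n/z and |H| = r. -/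
open Classical

/-!
Put `W i = ∑_{l ∈ H} 2 ^ k i l`. Doubling the weights of the lines crossing `Δ (i+1)` adds at
most `W i / t i`, so `log W (i+1) ≤ log W i + 1 / t i` and `log W m ≤ log |H| + ∑_{i<m} 1 / t i`.
The sum is a Riemann sum of `x ↦ 1 / (c √x)` and telescopes against `√(n/z - i)`, giving
`(2 / c) √(n/z)`. A single line has weight `2 ^ k m l ≤ W m`.
-/

open Finset Real

lemma inv_sqrt_le_two_mul_sqrt_sub_sqrt_sub_one {a : ℝ} (ha : 1 ≤ a) :
    1 / √a ≤ 2 * (√a - √(a - 1)) := by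
  have hsa : 0 < √a := Real.sqrt_pos.2 (by linarith)
  -- `√(a (a - 1)) ≤ a - 1/2` since `a (a - 1) ≤ (a - 1/2)²`
  have hgm : √a * √(a - 1) ≤ a - 1 / 2 := by
    rw [← Real.sqrt_mul (by linarith), ← Real.sqrt_sq (show 0 ≤ a - 1 / 2 by linarith)]
    exact Real.sqrt_le_sqrt (by nlinarith)
  rw [div_le_iff₀ hsa]
  nlinarith [Real.mul_self_sqrt (show 0 ≤ a by linarith)]

lemma sum_range_inv_sqrt_sub_le {a : ℝ} {m : ℕ} (h : ∀ i < m, 1 ≤ a - i) :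
    ∑ i ∈ range m, 1 / √(a - i) ≤ 2 * √a := by
  calc ∑ i ∈ range m, 1 / √(a - i)
      ≤ ∑ i ∈ range m, 2 * (√(a - i) - √(a - (i + 1 : ℕ))) := by
        refine sum_le_sum fun i hi => ?_
        rw [Nat.cast_succ, ← sub_sub]
        exact inv_sqrt_le_two_mul_sqrt_sub_sqrt_sub_one (h i (mem_range.1 hi))
    _ = 2 * (√a - √(a - m)) := by
        rw [← mul_sum, sum_range_sub' (fun i : ℕ => √(a - i)), Nat.cast_zero, sub_zero]
    _ ≤ 2 * √a := by linarith [Real.sqrt_nonneg (a - m)]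

lemma sum_range_one_div_mul_sqrt_le {n z m : ℕ} (hz : 0 < z) (hm : ∀ i < m, z ≤ n - i * z)
    {c : ℝ} (hc : 0 ≤ c) {t : ℕ → ℝ} (ht : ∀ i, t i = c * √(((n - i * z : ℕ) : ℝ) / z)) :
    ∑ i ∈ range m, 1 / t i ≤ 2 / c * √(n / z) := by
  have hremaining : ∀ i < m, ((n - i * z : ℕ) : ℝ) / z = n / z - i := fun i hi => by
    rw [Nat.cast_sub (by have := hm i hi; omega), Nat.cast_mul]
    field_simp
  have hrange : ∀ i < m, 1 ≤ (n / z : ℝ) - i := fun i hi => by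
    rw [← hremaining i hi, le_div_iff₀ (by exact_mod_cast hz), one_mul]
    exact_mod_cast hm i hi
  calc ∑ i ∈ range m, 1 / t i = 1 / c * ∑ i ∈ range m, 1 / √(n / z - i) := by
        rw [mul_sum]
        refine sum_congr rfl fun i hi => ?_
        rw [ht, hremaining i (mem_range.1 hi)]
        ring
    _ ≤ 1 / c * (2 * √(n / z)) := by
        gcongr
        exact sum_range_inv_sqrt_sub_le hrange
    _ = 2 / c * √(n / z) := by ring

lemma le_add_sum_of_succ_le {f d : ℕ → ℝ} {m : ℕ} (h : ∀ i < m, f (i + 1) ≤ f i + d i) :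
    f m ≤ f 0 + ∑ i ∈ range m, d i := by
  have hsum : ∑ i ∈ range m, (f (i + 1) - f i) ≤ ∑ i ∈ range m, d i :=
    sum_le_sum fun i hi => by linarith [h i (mem_range.1 hi)]
  rw [sum_range_sub] at hsum
  linarith

lemma log_le_log_add_sum_of_le_mul_one_add {W a : ℕ → ℝ} {m : ℕ} (hW : ∀ i, 0 < W i)
    (h : ∀ i < m, W (i + 1) ≤ W i * (1 + a i)) :
    log (W m) ≤ log (W 0) + ∑ i ∈ range m, a i := by
  refine le_add_sum_of_succ_le (f := fun i => log (W i)) fun i hi => ?_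
  have hexp : W (i + 1) ≤ W i * exp (a i) :=
    (h i hi).trans (mul_le_mul_of_nonneg_left (by linarith [add_one_le_exp (a i)]) (hW i).le)
  calc log (W (i + 1)) ≤ log (W i * exp (a i)) := log_le_log (hW _) hexp
    _ = log (W i) + a i := by rw [log_mul (hW i).ne' (exp_pos _).ne', log_exp]

lemma sum_two_pow_le_mul_one_add {L : Type*} {H : Finset L} {S : L → Prop} [DecidablePred S]
    {k k' : L → ℕ} (hk : ∀ l, k' l = k l + if S l then 1 else 0) {τ : ℝ}
    (hcut : ∑ l ∈ H.filter S, (2 : ℝ) ^ k l ≤ (∑ l ∈ H, (2 : ℝ) ^ k l) / τ) :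
    ∑ l ∈ H, (2 : ℝ) ^ k' l ≤ (∑ l ∈ H, (2 : ℝ) ^ k l) * (1 + 1 / τ) := by
  have hsplit : ∑ l ∈ H, (2 : ℝ) ^ k' l
      = ∑ l ∈ H, (2 : ℝ) ^ k l + ∑ l ∈ H.filter S, (2 : ℝ) ^ k l := by
    rw [sum_filter, ← sum_add_distrib]
    refine sum_congr rfl fun l _ => ?_
    rw [hk l]
    split_ifs <;> ring
  rw [hsplit, mul_one_add, mul_one_div]
  gcongr

/-- Combining the weight-doubling bound with the bound on `∑ 1/t i`: in the
simplicial-partition construction with weights `2 ^ (k i l)` (where `k i l`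
counts the cells among `Δ 1, …, Δ i` crossed by `l`), each `Δ (i+1)` chosen from
a `(1/t i)`-cutting of the current weighted set with `t i = c·√((n - i·z)/z)` and
`n - i·z ≥ 2z` for all iterations `i < m`, every line `l ∈ H` crosses at most
`k m l ≤ log₂ w_m(H) ≤ log₂ |H| + (2/(c·ln 2))·√(n/z) = O(√r + log |H|)` cells
(`r = n/z`). -/
theorem crossing_number_bound {L : Type*} (H : Finset L) (hH : H.Nonempty)
    (Cross : L → ℕ → Prop)
    (n z m : ℕ) (hz : 0 < z) (hm : ∀ i < m, 2 * z ≤ n - i * z)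
    (c : ℝ) (hc : 0 < c)
    (k : ℕ → L → ℕ) (hk0 : ∀ l, k 0 l = 0)
    (hkS : ∀ (i : ℕ) (l : L),
      k (i + 1) l = k i l + if Cross l (i + 1) then 1 else 0)
    (t : ℕ → ℝ) (ht : ∀ i, t i = c * Real.sqrt (((n - i * z : ℕ) : ℝ) / z))
    (hcut : ∀ i < m,
      ∑ l ∈ H.filter (fun l => Cross l (i + 1)), (2 : ℝ) ^ (k i l)
        ≤ (∑ l ∈ H, (2 : ℝ) ^ (k i l)) / t i) :
    ∀ l ∈ H, (k m l : ℝ)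
        ≤ Real.logb 2 H.card +
          (2 / (c * Real.log 2)) * Real.sqrt ((n : ℝ) / z) := by
  intro l hl
  set W : ℕ → ℝ := fun i => ∑ x ∈ H, (2 : ℝ) ^ k i x
  have hWpos : ∀ i, 0 < W i := fun i => sum_pos (fun x _ => by positivity) hH
  have hW0 : W 0 = H.card := by simp [W, hk0]
  have hstep : ∀ i < m, W (i + 1) ≤ W i * (1 + 1 / t i) := fun i hi =>
    sum_two_pow_le_mul_one_add (hkS i) (hcut i hi)
  have hsum := sum_range_one_div_mul_sqrt_le hz
    (fun i hi => (by omega : z ≤ 2 * z).trans (hm i hi)) hc.le ht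
  have hlogW := log_le_log_add_sum_of_le_mul_one_add hWpos hstep
  have hkl : (k m l : ℝ) * log 2 ≤ log (W m) := by
    rw [← log_pow]
    exact log_le_log (by positivity) (single_le_sum (f := fun x => (2 : ℝ) ^ k m x)
      (fun x _ => by positivity) hl)
  have hlog2 : 0 < log 2 := log_pos one_lt_two
  rw [hW0] at hlogW
  calc (k m l : ℝ) ≤ log (W m) / log 2 := (le_div_iff₀ hlog2).2 hkl
    _ ≤ (log H.card + 2 / c * √(n / z)) / log 2 := by gcongr; linarith
    _ = logb 2 H.card + 2 / (c * log 2) * √(n / z) := by rw [logb]; field_simp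
end
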